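/- Subject reduction for λα: if Γ ⊢ A is derivable and A → B is a one-step λα-reduction (closed under compatible contexts), then Γ ⊢ B is derivable. -/

import Mathlib

abbrev Var := ℕ
abbrev Ctx := Finset Var × List Var

/-- `Γ,x` : extend the local part with `x` as innermost (rightmost) variable.
Lists represent local contexts with head = outermost (leftmost). -/
def Ctx.snoc (Γ : Ctx) (x : Var) : Ctx := (Γ.1, Γ.2 ++ [x])

/-- The least partial order on contexts generated by
`(G,L) < (G ∪ {x}, L)` for `x ∉ G` and `(G,L) < (G \ {x}, x::L)`. -/
inductive CtxLe : Ctx → Ctx → Prop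
  | refl (Γ : Ctx) : CtxLe Γ Γ
  | trans {Γ Δ Θ : Ctx} : CtxLe Γ Δ → CtxLe Δ Θ → CtxLe Γ Θ
  | glob (G : Finset Var) (L : List Var) (x : Var) (h : x ∉ G) :
      CtxLe (G, L) (insert x G, L)
  | loc (G : Finset Var) (L : List Var) (x : Var) :
      CtxLe (G, L) (G.erase x, x :: L)

def Compatible (Γ Δ : Ctx) : Prop := ∃ Θ, CtxLe Γ Θ ∧ CtxLe Δ Θ

/-- Auxiliary supremum on contexts whose local lists have head = innermost. -/
def supAux : Finset Var → List Var → Finset Var → List Var → Option (Finset Var × List Var)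
  | G₁, [], G₂, [] => some (G₁ ∪ G₂, [])
  | G₁, x :: l₁, G₂, [] =>
      (supAux G₁ l₁ (G₂.erase x) []).map fun p => (p.1, x :: p.2)
  | G₁, [], G₂, x :: l₂ =>
      (supAux (G₁.erase x) [] G₂ l₂).map fun p => (p.1, x :: p.2)
  | G₁, x :: l₁, G₂, y :: l₂ =>
      if x = y then (supAux G₁ l₁ G₂ l₂).map fun p => (p.1, x :: p.2) else none
  termination_by _ l₁ _ l₂ => l₁.length + l₂.length

/-- The (partial) supremum `Γ ⊔ Δ` of two contexts. -/
def ctxSup (Γ Δ : Ctx) : Option Ctx :=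
  (supAux Γ.1 Γ.2.reverse Δ.1 Δ.2.reverse).map fun p => (p.1, p.2.reverse)

/-- The partial operation `O_{λx}` : `O_{λx}(Γ,x) = Γ`, `O_{λx}(G, nil) = (G \ {x}, nil)`,
undefined otherwise. -/
def Olam (x : Var) (Γ : Ctx) : Option Ctx :=
  match Γ.2.reverse with
  | [] => some (Γ.1.erase x, [])
  | y :: l => if y = x then some (Γ.1, l.reverse) else none

mutual
/-- Terms of the calculus λα. -/
inductive Tm : Type
  | var : Var → Tm
  | app : Tm → Tm → Tm
  | lam : Var → Tm → Tm
  | sub : Sb → Tm → Tm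
/-- Substitutions of the calculus λα: `[B/x]`, `Wx`, `{yx}`, `Sₓ`. -/
inductive Sb : Type
  | push : Tm → Var → Sb
  | weak : Var → Sb
  | ren : Var → Var → Sb
  | lift : Sb → Var → Sb
end

mutual
/-- The typing judgement `Γ ⊢ A` of λα (rules R1–R6). -/
inductive Judg : Ctx → Tm → Prop
  | r1 {G : Finset Var} {x : Var} (h : x ∈ G) : Judg (G, []) (.var x)
  | r2 (Γ : Ctx) (x : Var) : Judg (Γ.snoc x) (.var x)
  | r3 {Γ : Ctx} {x y : Var} (h : x ≠ y) : Judg Γ (.var x) → Judg (Γ.snoc y) (.var x)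
  | r4 {Γ A B} : Judg Γ A → Judg Γ B → Judg Γ (.app A B)
  | r5 {Γ x A} : Judg (Ctx.snoc Γ x) A → Judg Γ (.lam x A)
  | r6 {Γ Δ S A} : SJudg Γ S Δ → Judg Δ A → Judg Γ (.sub S A)
/-- The judgement `Γ ⊢ S ▷ Δ` of λα (rules R7–R10). -/
inductive SJudg : Ctx → Sb → Ctx → Prop
  | r7 {Γ B x} : Judg Γ B → SJudg Γ (.push B x) (Γ.snoc x)
  | r8 (Γ x) : SJudg (Ctx.snoc Γ x) (.weak x) Γ
  | r9 (Γ y x) : SJudg (Ctx.snoc Γ y) (.ren y x) (Ctx.snoc Γ x)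
  | r10 {Γ Δ S} (x) : SJudg Γ S Δ → SJudg (Ctx.snoc Γ x) (.lift S x) (Ctx.snoc Δ x)
end

mutual
/-- Weight of a term, used for the termination of `FV`. -/
def wT : Tm → ℕ
  | .var _ => 1
  | .app a b => wT a + wT b + 1
  | .lam _ a => wT a + 1
  | .sub s a => wS s + wT a
/-- Weight of a substitution, used for the termination of `FV`. -/
def wS : Sb → ℕ
  | .weak _ => 1
  | .push b _ => wT b + 4
  | .ren _ _ => 4
  | .lift s _ => wS s + 3
end

/-- The partial free-variable function of λα, valued in contexts. -/
def FV : Tm → Option Ctx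
  | .var x => some ({x}, [])
  | .app A B => do ctxSup (← FV A) (← FV B)
  | .lam x A => do Olam x (← FV A)
  | .sub (.weak x) A => (FV A).map (fun Γ => Ctx.snoc Γ x)
  | .sub (.push B x) A => FV (.app (.lam x A) B)
  | .sub (.ren y x) A => FV (.sub (.weak y) (.lam x A))
  | .sub (.lift S x) A => FV (.sub (.weak x) (.sub S (.lam x A)))
  termination_by t => wT t
  decreasing_by all_goals simp [wT, wS] <;> omega

/-- `x ∈ Γ` : membership in the global or local part of a context. -/
def memCtx (x : Var) (Γ : Ctx) : Prop := x ∈ Γ.1 ∨ x ∈ Γ.2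

mutual
/-- One-step λα-reduction (all rules including Beta and α), closed under
compatible contexts. -/
inductive Step : Tm → Tm → Prop
  | beta {x A B} : Step (.app (.lam x A) B) (.sub (.push B x) A)
  | app {S A B} : Step (.sub S (.app A B)) (.app (.sub S A) (.sub S B))
  | lam {S x A} : Step (.sub S (.lam x A)) (.lam x (.sub (.lift S x) A))
  | var {B x} : Step (.sub (.push B x) (.var x)) B
  | shift {B x A} : Step (.sub (.push B x) (.sub (.weak x) A)) A
  | shift' {B x z} (h : x ≠ z) : Step (.sub (.push B x) (.var z)) (.var z)
  | idVar {y x} : Step (.sub (.ren y x) (.var x)) (.var y)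
  | idShift {y x A} : Step (.sub (.ren y x) (.sub (.weak x) A)) (.sub (.weak y) A)
  | idShift' {y x z} (h : x ≠ z) :
      Step (.sub (.ren y x) (.var z)) (.sub (.weak y) (.var z))
  | liftVar {S x} : Step (.sub (.lift S x) (.var x)) (.var x)
  | liftShift {S x A} :
      Step (.sub (.lift S x) (.sub (.weak x) A)) (.sub (.weak x) (.sub S A))
  | liftShift' {S x z} (h : x ≠ z) :
      Step (.sub (.lift S x) (.var z)) (.sub (.weak x) (.sub S (.var z)))
  | w {x z} (h : x ≠ z) : Step (.sub (.weak x) (.var z)) (.var z)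
  | alpha {x y A Φ} (hFV : FV (.lam x A) = some Φ) (hx : memCtx x Φ)
      (hy : ¬ memCtx y Φ) : Step (.lam x A) (.lam y (.sub (.ren y x) A))
  | lamCong {x A A'} : Step A A' → Step (.lam x A) (.lam x A')
  | appL {A A' B} : Step A A' → Step (.app A B) (.app A' B)
  | appR {A B B'} : Step B B' → Step (.app A B) (.app A B')
  | subL {S S' A} : SStep S S' → Step (.sub S A) (.sub S' A)
  | subR {S A A'} : Step A A' → Step (.sub S A) (.sub S A')
/-- One-step λα-reduction inside substitutions. -/
inductive SStep : Sb → Sb → Prop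
  | push {B B' : Tm} {x} : Step B B' → SStep (.push B x) (.push B' x)
  | lift {S S' : Sb} {x} : SStep S S' → SStep (.lift S x) (.lift S' x)
end

/-! Inverting a derivation of `Γ ⊢ A` along the shape of `A`, or of `Γ ⊢ S ▷ Δ` along the shape
of `S`, determines the contexts of the premises, because `Γ,x` determines `Γ` and `x`; and for a
variable `z ≠ x`, `Γ,x ⊢ z` can only come from `Γ ⊢ z`. For each redex the premises so obtained
reassemble into a derivation of the contractum at the same context; the congruence cases follow by
structural recursion on the reduction, mutually for terms and substitutions. -/

theorem Ctx.snoc_inj {Γ Δ : Ctx} {x y : Var} : Γ.snoc x = Δ.snoc y ↔ Γ = Δ ∧ x = y := by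
  simp only [Ctx.snoc, Prod.ext_iff, List.append_singleton_inj, and_assoc]

section Inversion

variable {Γ Δ : Ctx} {A B : Tm} {S : Sb} {x y : Var}

theorem judg_app_iff : Judg Γ (.app A B) ↔ Judg Γ A ∧ Judg Γ B :=
  ⟨fun | .r4 hA hB => ⟨hA, hB⟩, fun ⟨hA, hB⟩ => .r4 hA hB⟩

theorem judg_lam_iff : Judg Γ (.lam x A) ↔ Judg (Γ.snoc x) A :=
  ⟨fun | .r5 hA => hA, .r5⟩

theorem judg_sub_iff : Judg Γ (.sub S A) ↔ ∃ Δ, SJudg Γ S Δ ∧ Judg Δ A :=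
  ⟨fun | .r6 hS hA => ⟨_, hS, hA⟩, fun ⟨_, hS, hA⟩ => .r6 hS hA⟩

theorem sJudg_push_iff : SJudg Γ (.push B x) Δ ↔ Δ = Γ.snoc x ∧ Judg Γ B :=
  ⟨fun | .r7 hB => ⟨rfl, hB⟩, fun ⟨hΔ, hB⟩ => hΔ ▸ .r7 hB⟩

theorem sJudg_weak_iff : SJudg Γ (.weak x) Δ ↔ Γ = Δ.snoc x :=
  ⟨fun | .r8 .. => rfl, fun hΓ => hΓ ▸ .r8 Δ x⟩

theorem sJudg_ren_iff : SJudg Γ (.ren y x) Δ ↔ ∃ Θ : Ctx, Γ = Θ.snoc y ∧ Δ = Θ.snoc x :=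
  ⟨fun | .r9 .. => ⟨_, rfl, rfl⟩, fun ⟨Θ, hΓ, hΔ⟩ => hΓ ▸ hΔ ▸ .r9 Θ y x⟩

theorem sJudg_lift_iff :
    SJudg Γ (.lift S x) Δ ↔ ∃ Γ' Δ' : Ctx, Γ = Γ'.snoc x ∧ Δ = Δ'.snoc x ∧ SJudg Γ' S Δ' :=
  ⟨fun | .r10 _ hS => ⟨_, _, rfl, rfl, hS⟩, fun ⟨_, _, hΓ, hΔ, hS⟩ => hΓ ▸ hΔ ▸ .r10 x hS⟩

theorem judg_var_snoc_iff {z : Var} (hxz : x ≠ z) :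
    Judg (Γ.snoc x) (.var z) ↔ Judg Γ (.var z) := by
  refine ⟨fun h => ?_, .r3 hxz.symm⟩
  generalize hΘ : Γ.snoc x = Θ at h
  cases h with
  | r1 => simp [Ctx.snoc] at hΘ
  | r2 => exact absurd (Ctx.snoc_inj.1 hΘ).2 hxz
  | r3 _ hz => exact (Ctx.snoc_inj.1 hΘ).1 ▸ hz

theorem judg_sub_weak_snoc_iff : Judg (Γ.snoc x) (.sub (.weak x) A) ↔ Judg Γ A := by
  refine ⟨fun h => ?_, .r6 (.r8 Γ x)⟩
  obtain ⟨Δ, hW, hA⟩ := judg_sub_iff.1 h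
  exact (Ctx.snoc_inj.1 (sJudg_weak_iff.1 hW)).1 ▸ hA

end Inversion

mutual

theorem Judg.of_step {Γ : Ctx} {A B : Tm} (h : Step A B) (hA : Judg Γ A) : Judg Γ B := by
  cases h with
  | beta =>
    obtain ⟨hLam, hB⟩ := judg_app_iff.1 hA
    exact .r6 (.r7 hB) (judg_lam_iff.1 hLam)
  | app =>
    obtain ⟨_, hS, hAB⟩ := judg_sub_iff.1 hA
    obtain ⟨hA₁, hA₂⟩ := judg_app_iff.1 hAB
    exact .r4 (.r6 hS hA₁) (.r6 hS hA₂)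
  | lam =>
    obtain ⟨_, hS, hLam⟩ := judg_sub_iff.1 hA
    exact .r5 (.r6 (.r10 _ hS) (judg_lam_iff.1 hLam))
  | var =>
    obtain ⟨_, hS, -⟩ := judg_sub_iff.1 hA
    exact (sJudg_push_iff.1 hS).2
  | shift =>
    obtain ⟨_, hS, hW⟩ := judg_sub_iff.1 hA
    obtain ⟨rfl, -⟩ := sJudg_push_iff.1 hS
    exact judg_sub_weak_snoc_iff.1 hW
  | shift' hxz =>
    obtain ⟨_, hS, hz⟩ := judg_sub_iff.1 hA
    obtain ⟨rfl, -⟩ := sJudg_push_iff.1 hS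
    exact (judg_var_snoc_iff hxz).1 hz
  | idVar =>
    obtain ⟨_, hS, -⟩ := judg_sub_iff.1 hA
    obtain ⟨Θ, rfl, -⟩ := sJudg_ren_iff.1 hS
    exact .r2 Θ _
  | idShift =>
    obtain ⟨_, hS, hW⟩ := judg_sub_iff.1 hA
    obtain ⟨_, rfl, rfl⟩ := sJudg_ren_iff.1 hS
    exact judg_sub_weak_snoc_iff.2 (judg_sub_weak_snoc_iff.1 hW)
  | idShift' hxz =>
    obtain ⟨_, hS, hz⟩ := judg_sub_iff.1 hA
    obtain ⟨_, rfl, rfl⟩ := sJudg_ren_iff.1 hS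
    exact judg_sub_weak_snoc_iff.2 ((judg_var_snoc_iff hxz).1 hz)
  | liftVar =>
    obtain ⟨_, hS, -⟩ := judg_sub_iff.1 hA
    obtain ⟨Γ', _, rfl, -⟩ := sJudg_lift_iff.1 hS
    exact .r2 Γ' _
  | liftShift =>
    obtain ⟨_, hS, hW⟩ := judg_sub_iff.1 hA
    obtain ⟨_, _, rfl, rfl, hS'⟩ := sJudg_lift_iff.1 hS
    exact judg_sub_weak_snoc_iff.2 (.r6 hS' (judg_sub_weak_snoc_iff.1 hW))
  | liftShift' hxz =>
    obtain ⟨_, hS, hz⟩ := judg_sub_iff.1 hA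
    obtain ⟨_, _, rfl, rfl, hS'⟩ := sJudg_lift_iff.1 hS
    exact judg_sub_weak_snoc_iff.2 (.r6 hS' ((judg_var_snoc_iff hxz).1 hz))
  | w hxz =>
    obtain ⟨_, hS, hz⟩ := judg_sub_iff.1 hA
    obtain rfl := sJudg_weak_iff.1 hS
    exact (judg_var_snoc_iff hxz).2 hz
  | alpha =>
    exact .r5 (.r6 (.r9 Γ _ _) (judg_lam_iff.1 hA))
  | lamCong h => exact .r5 ((judg_lam_iff.1 hA).of_step h)
  | appL h =>
    obtain ⟨hA₁, hA₂⟩ := judg_app_iff.1 hA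
    exact .r4 (hA₁.of_step h) hA₂
  | appR h =>
    obtain ⟨hA₁, hA₂⟩ := judg_app_iff.1 hA
    exact .r4 hA₁ (hA₂.of_step h)
  | subL h =>
    obtain ⟨_, hS, hA'⟩ := judg_sub_iff.1 hA
    exact .r6 (hS.of_sStep h) hA'
  | subR h =>
    obtain ⟨_, hS, hA'⟩ := judg_sub_iff.1 hA
    exact .r6 hS (hA'.of_step h)

theorem SJudg.of_sStep {Γ Δ : Ctx} {S S' : Sb} (h : SStep S S') (hS : SJudg Γ S Δ) :
    SJudg Γ S' Δ := by
  cases h with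
  | push h =>
    obtain ⟨rfl, hB⟩ := sJudg_push_iff.1 hS
    exact .r7 (hB.of_step h)
  | lift h =>
    obtain ⟨_, _, rfl, rfl, hS'⟩ := sJudg_lift_iff.1 hS
    exact .r10 _ (hS'.of_sStep h)

end

/-- Subject reduction for λα. -/
theorem subject_reduction (Γ : Ctx) (A B : Tm) :
    Judg Γ A → Step A B → Judg Γ B :=
  fun hA h => hA.of_step h
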